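/- Let n ≥ 3 be a positive integer and let p be a prime number that does not divide n. If p < log n, then G(n·p) > G(n), where log denotes the natural logarithm. -/

import Mathlib

open ArithmeticFunction Real
open scoped ArithmeticFunction.sigma

/-- The Grönwall function `G(n) = σ(n) / (n · log log n)`. -/
noncomputable def G (n : ℕ) : ℝ := (σ 1 n : ℝ) / (n * Real.log (Real.log n))

/-!
Multiplying `n` by a prime `p ∤ n` multiplies `σ(n)/n` by `(p + 1)/p` and replaces `log log n`
by `log (L + log p)` with `L = log n`. By `log (1 + x) ≤ x` this exceeds `log L` by at most
`log p / L`, which is less than `log L / p` because `x ↦ x log x` is increasing and `p < L`.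
So `p · log log (n p) < (p + 1) · log log n`, which is the claim.
-/

theorem sigma_one_mul_prime {n p : ℕ} (hp : p.Prime) (hpn : ¬ p ∣ n) :
    σ 1 (n * p) = σ 1 n * (p + 1) := by
  have hcop : n.Coprime p := (hp.coprime_iff_not_dvd.mpr hpn).symm
  rw [isMultiplicative_sigma.map_mul_of_coprime hcop]
  congr 1
  simpa [Finset.sum_range_succ, add_comm] using sigma_one_apply_prime_pow (i := 1) hp

namespace Real

theorem log_add_le_log_add_div {x a : ℝ} (hx : 0 < x) (ha : 0 ≤ a) :
    log (x + a) ≤ log x + a / x := by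
  have hxa : 0 < x + a := by linarith
  have := log_le_sub_one_of_pos (div_pos hxa hx)
  rw [log_div hxa.ne' hx.ne', add_div, div_self hx.ne'] at this
  linarith

theorem mul_log_add_log_lt {q L : ℝ} (hq : 1 < q) (hqL : q < L) :
    q * log (L + log q) < (q + 1) * log L := by
  have hq0 : 0 < q := by linarith
  have hL0 : 0 < L := by linarith
  have hlogq : 0 < log q := log_pos hq
  have hmul_log : q * log q < L * log L :=
    mul_lt_mul'' hqL (log_lt_log hq0 hqL) hq0.le hlogq.le
  have hdiv : log q / L < log L / q := by
    rw [div_lt_div_iff₀ hL0 hq0]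
    linarith
  calc q * log (L + log q) ≤ q * (log L + log q / L) :=
        mul_le_mul_of_nonneg_left (log_add_le_log_add_div hL0 hlogq.le) hq0.le
    _ < q * (log L + log L / q) := by gcongr
    _ = (q + 1) * log L := by field_simp

end Real

theorem gronwall_increase_of_prime_lt_log_general (n : ℕ) (p : ℕ) (hp : p.Prime)
    (hpn : ¬ p ∣ n) (h : (p : ℝ) < Real.log n) :
    G (n * p) > G n := by
  have hp1 : (1 : ℝ) < p := by exact_mod_cast hp.one_lt
  have hp0 : (0 : ℝ) < p := by linarith
  have hn : n ≠ 0 := by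
    rintro rfl
    simp only [CharP.cast_eq_zero, Real.log_zero] at h
    linarith
  have hn0 : (0 : ℝ) < n := by positivity
  have hloglog_n : 0 < Real.log (Real.log n) := log_pos (by linarith)
  have hlog_np : Real.log (n * p) = Real.log n + Real.log p := log_mul hn0.ne' hp0.ne'
  have hloglog_np : 0 < Real.log (Real.log (n * p)) := by
    rw [hlog_np]
    exact log_pos (by linarith [log_pos hp1])
  have hsigma : (0 : ℝ) < σ 1 n := mod_cast sigma_pos 1 n hn
  have key := Real.mul_log_add_log_lt hp1 h
  rw [← hlog_np] at key
  unfold G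
  rw [gt_iff_lt, Nat.cast_mul, sigma_one_mul_prime hp hpn, div_lt_div_iff₀ (by positivity)
    (by positivity)]
  push_cast
  nlinarith [mul_lt_mul_of_pos_left key (mul_pos hsigma hn0)]

theorem gronwall_increase_of_prime_lt_log (n : ℕ) (hn : 3 ≤ n) (p : ℕ) (hp : p.Prime)
    (hpn : ¬ p ∣ n) (h : (p : ℝ) < Real.log n) :
    G (n * p) > G n :=
  gronwall_increase_of_prime_lt_log_general n p hp hpn h
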